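/- Let h be a real form of degree d in n variables that is indefinite (it attains both positive and negative values on ℝⁿ) and is a product of d real linear forms. If h² = Σ_{j=1}^m h_j² where each h_j is a real form of degree d, then there exist real numbers λ₁,…,λ_m with Σ_{j=1}^m λ_j² = 1 such that h_j = λ_j·h for every j. -/

import Mathlib

/-!
A form vanishing on the hyperplane `L = 0` of a nonzero linear form `L` is divisible by `L`.
If `h² = ∑ fⱼ²` over `ℝ`, every `fⱼ` vanishes wherever a linear factor of `h` does, so peeling
off the factors one at a time shows `h ∣ fⱼ`. Since `fⱼ` and `h` are forms of the same degree,
`fⱼ = λⱼ h` for a constant `λⱼ`, and `h² = (∑ λⱼ²) h²` with `h ≠ 0` gives `∑ λⱼ² = 1`.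
-/

open MvPolynomial

namespace MvPolynomial

variable {σ : Type*}

theorem IsHomogeneous.exists_eq_sum_smul_X {R : Type*} [CommSemiring R] [Fintype σ]
    {L : MvPolynomial σ R} (hL : L.IsHomogeneous 1) : ∃ c : σ → R, L = ∑ i, c i • X i := by
  have hmem : L ∈ homogeneousSubmodule σ R 1 := hL
  rw [homogeneousSubmodule_one_eq_span_X, Submodule.mem_span_range_iff_exists_fun] at hmem
  obtain ⟨c, hc⟩ := hmem
  exact ⟨c, hc.symm⟩

theorem eval_bind₁ {R τ : Type*} [CommSemiring R] (a : τ → R) (F : σ → MvPolynomial τ R)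
    (p : MvPolynomial σ R) : eval a (bind₁ F p) = eval (fun i ↦ eval a (F i)) p :=
  eval₂Hom_bind₁ _ _ _ _

theorem IsHomogeneous.exists_eq_smul_of_dvd {R : Type*} [CommRing R] [IsDomain R]
    {h f : MvPolynomial σ R} {d : ℕ} (hh : h.IsHomogeneous d) (hh0 : h ≠ 0)
    (hf : f.IsHomogeneous d) (hdvd : h ∣ f) : ∃ c : R, f = c • h := by
  obtain ⟨q, rfl⟩ := hdvd
  rcases eq_or_ne q 0 with rfl | hq0
  · exact ⟨0, by simp⟩
  have hdeg : h.totalDegree + q.totalDegree = h.totalDegree := by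
    rw [← totalDegree_mul_of_isDomain hh0 hq0, hf.totalDegree (mul_ne_zero hh0 hq0),
      hh.totalDegree hh0]
  refine ⟨coeff 0 q, ?_⟩
  conv_lhs => rw [totalDegree_eq_zero_iff_eq_C.mp (by omega : q.totalDegree = 0)]
  rw [smul_eq_C_mul, mul_comm]

section Infinite

variable {K : Type*} [Field K] [Infinite K]

theorem sum_smul_X_dvd_of_eval_eq_zero [Fintype σ] [DecidableEq σ] {c : σ → K} {k : σ}
    (hk : c k ≠ 0) {p : MvPolynomial σ K}
    (hp : ∀ a, eval a (∑ i, c i • X i) = 0 → eval a p = 0) : ∑ i, c i • X i ∣ p := by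
  set L : MvPolynomial σ K := ∑ i, c i • X i
  set I := Ideal.span {L}
  -- Substituting `X k ↦ X k - L / c k` projects onto the hyperplane `L = 0` and is the identity
  -- modulo `L`.
  set F : σ → MvPolynomial σ K := X - Pi.single k ((c k)⁻¹ • L)
  have hFL : bind₁ F L = 0 := by
    simp [L, F, smul_sub, Finset.sum_sub_distrib, Pi.single_apply, hk]
  have hF_mod : (Ideal.Quotient.mkₐ K I).comp (bind₁ F) = Ideal.Quotient.mkₐ K I := by
    refine algHom_ext fun i ↦ ?_
    have hsingle : (Pi.single k ((c k)⁻¹ • L) : σ → MvPolynomial σ K) i ∈ I := by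
      rcases eq_or_ne i k with rfl | hik
      · simpa using I.smul_of_tower_mem (c i)⁻¹ (Ideal.mem_span_singleton_self L)
      · simp [hik]
    simpa [F, Ideal.Quotient.eq_zero_iff_mem] using hsingle
  have hFp : bind₁ F p = 0 := MvPolynomial.funext fun a ↦ by
    rw [eval_bind₁, map_zero]
    exact hp _ (by rw [← eval_bind₁, hFL, map_zero])
  have hp_mod : Ideal.Quotient.mkₐ K I p = 0 := by
    rw [← hF_mod, AlgHom.comp_apply, hFp, map_zero]
  exact Ideal.mem_span_singleton.mp (Ideal.Quotient.eq_zero_iff_mem.mp hp_mod)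

theorem IsHomogeneous.dvd_of_eval_eq_zero [Fintype σ] {L p : MvPolynomial σ K}
    (hL : L.IsHomogeneous 1) (hL0 : L ≠ 0) (hp : ∀ a, eval a L = 0 → eval a p = 0) : L ∣ p := by
  classical
  obtain ⟨c, rfl⟩ := hL.exists_eq_sum_smul_X
  obtain ⟨k, hk⟩ : ∃ k, c k ≠ 0 := by
    by_contra! hc
    exact hL0 (by simp [hc])
  exact sum_smul_X_dvd_of_eval_eq_zero hk hp

end Infinite

section Ordered

variable {K : Type*} [Field K] [LinearOrder K] [IsStrictOrderedRing K] [Fintype σ]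
  {ι : Type*} [Fintype ι]

theorem IsHomogeneous.dvd_of_sum_sq_eq_mul {L r : MvPolynomial σ K} (hL : L.IsHomogeneous 1)
    (hL0 : L ≠ 0) {g : ι → MvPolynomial σ K} (hg : ∑ j, g j ^ 2 = L * r) (j : ι) : L ∣ g j := by
  refine hL.dvd_of_eval_eq_zero hL0 fun a ha ↦ ?_
  have hsum : ∑ j, eval a (g j) * eval a (g j) = 0 := by
    simpa [ha, sq] using congrArg (eval a) hg
  exact (Finset.sum_mul_self_eq_zero_iff _ _).mp hsum j (Finset.mem_univ j)

theorem prod_dvd_of_sum_sq_eq_sq_prod {κ : Type*} {L : κ → MvPolynomial σ K}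
    (hL : ∀ i, (L i).IsHomogeneous 1) (hL0 : ∀ i, L i ≠ 0) (s : Finset κ)
    {g : ι → MvPolynomial σ K} (hg : ∑ j, g j ^ 2 = (∏ i ∈ s, L i) ^ 2) (j : ι) :
    ∏ i ∈ s, L i ∣ g j := by
  classical
  induction s using Finset.induction_on generalizing g with
  | empty => simp
  | insert a s ha ih =>
    rw [Finset.prod_insert ha] at hg ⊢
    have hdvd (j' : ι) : L a ∣ g j' :=
      (hL a).dvd_of_sum_sq_eq_mul (hL0 a) (r := L a * (∏ i ∈ s, L i) ^ 2) (by rw [hg]; ring) j'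
    choose g' hg' using hdvd
    have hg'sum : ∑ j, g' j ^ 2 = (∏ i ∈ s, L i) ^ 2 := by
      refine mul_left_cancel₀ (pow_ne_zero 2 (hL0 a)) ?_
      calc L a ^ 2 * ∑ j, g' j ^ 2 = ∑ j, g j ^ 2 := by simp_rw [Finset.mul_sum, hg', mul_pow]
        _ = L a ^ 2 * (∏ i ∈ s, L i) ^ 2 := by rw [hg, mul_pow]
    rw [hg' j]
    exact mul_dvd_mul_left _ (ih hg'sum)

end Ordered

end MvPolynomial

theorem sq_of_indefinite_product_of_linear_sos (n d m : ℕ)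
    (h : MvPolynomial (Fin n) ℝ)
    (hindef : ∃ a b : Fin n → ℝ, 0 < eval a h ∧ eval b h < 0)
    (hlin : ∃ L : Fin d → MvPolynomial (Fin n) ℝ,
      (∀ i, (L i).IsHomogeneous 1) ∧ h = ∏ i, L i)
    (f : Fin m → MvPolynomial (Fin n) ℝ)
    (hf : ∀ j, (f j).IsHomogeneous d)
    (heq : h ^ 2 = ∑ j, (f j) ^ 2) :
    ∃ lam : Fin m → ℝ, (∑ j, (lam j) ^ 2 = 1) ∧ ∀ j, f j = lam j • h := by
  obtain ⟨a, -, ha, -⟩ := hindef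
  obtain ⟨L, hL, rfl⟩ := hlin
  have hne : ∏ i, L i ≠ 0 := fun h0 ↦ by simp [h0] at ha
  have hL0 (i : Fin d) : L i ≠ 0 := Finset.prod_ne_zero_iff.mp hne i (Finset.mem_univ i)
  have hhom : (∏ i, L i).IsHomogeneous d := by
    simpa using IsHomogeneous.prod Finset.univ L (fun _ ↦ 1) fun i _ ↦ hL i
  have hdvd (j : Fin m) : ∏ i, L i ∣ f j :=
    prod_dvd_of_sum_sq_eq_sq_prod hL hL0 Finset.univ heq.symm j
  choose lam hlam using fun j ↦ hhom.exists_eq_smul_of_dvd hne (hf j) (hdvd j)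
  refine ⟨lam, smul_left_injective ℝ (pow_ne_zero 2 hne) ?_, hlam⟩
  calc (∑ j, lam j ^ 2) • (∏ i, L i) ^ 2 = ∑ j, f j ^ 2 := by
        simp only [Finset.sum_smul, hlam, smul_pow]
    _ = (1 : ℝ) • (∏ i, L i) ^ 2 := by rw [← heq, one_smul]
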